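/- Let G = (I⁰, I¹; F; w) be a distribution instance and let (α⁰, α¹) be a refinement pair that is locally maximin on both sides and mutually proportional responses. Then for every γ ≥ 0 and every refinement pair (β⁰, β¹) of G, D_γ(α⁰‖α¹) ≤ D_γ(β⁰‖β¹); i.e., (α⁰, α¹) is simultaneously a closest refinement pair for every hockey-stick divergence. -/

import Mathlib

/-!
Fix `γ`, let `ρ` be the side-1 payload density of `a0`, and let `E` be the set of edges `ij`
with `γ ρ(j) < 1`. Since `a1(ij) = a0(ij) / ρ(j)`, the difference `a1 - γ a0` is nonnegative
exactly on `E`, so `E` attains `D_γ(a0 ‖ a1)`. Every side-1 refinement gives `E` the same mass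
`w(J)`, where `J` is the set of heads of `E`. Because `J` is a down-set for `ρ`, local maximinality
makes each side-0 vertex adjacent to `J` send all of its weight into `J` under `a0`, which is as
much as any side-0 refinement `b0` can; hence
`D_γ(a0 ‖ a1) = w(J) - γ a0(E) ≤ b1(E) - γ b0(E) ≤ D_γ(b0 ‖ b1)`.
-/

open Finset

variable {V : Type*} [DecidableEq V]

/-- `(I0, I1; F; w)` is a valid input instance: the vertex sets `I0`, `I1` are disjoint,
every edge has its first endpoint in `I0` and second endpoint in `I1`,
and vertex weights are positive. -/
def IsInstance (I0 I1 : Finset V) (F : Finset (V × V)) (w : V → ℝ) : Prop :=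
  Disjoint I0 I1 ∧ (∀ e ∈ F, e.1 ∈ I0 ∧ e.2 ∈ I1) ∧ (∀ v ∈ I0 ∪ I1, 0 < w v)

/-- Payload received by a side-0 vertex `i` from edge weights `a`
(the sum of `a` over edges incident to `i`). -/
noncomputable def payload0 (F : Finset (V × V)) (a : V × V → ℝ) (i : V) : ℝ :=
  ∑ e ∈ F.filter (fun e => e.1 = i), a e

/-- Payload received by a side-1 vertex `j` from edge weights `a`. -/
noncomputable def payload1 (F : Finset (V × V)) (a : V × V → ℝ) (j : V) : ℝ :=
  ∑ e ∈ F.filter (fun e => e.2 = j), a e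

/-- `a` is a refinement of the side-0 vertex weights. -/
def IsRefinement0 (I0 : Finset V) (F : Finset (V × V)) (w : V → ℝ) (a : V × V → ℝ) : Prop :=
  (∀ e, 0 ≤ a e) ∧ (∀ e, e ∉ F → a e = 0) ∧
    ∀ i ∈ I0, (∃ j, (i, j) ∈ F) → payload0 F a i = w i

/-- `a` is a refinement of the side-1 vertex weights. -/
def IsRefinement1 (I1 : Finset V) (F : Finset (V × V)) (w : V → ℝ) (a : V × V → ℝ) : Prop :=
  (∀ e, 0 ≤ a e) ∧ (∀ e, e ∉ F → a e = 0) ∧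
    ∀ j ∈ I1, (∃ i, (i, j) ∈ F) → payload1 F a j = w j

/-- Payload density at a side-0 vertex. -/
noncomputable def density0 (F : Finset (V × V)) (w : V → ℝ) (a : V × V → ℝ) (i : V) : ℝ :=
  payload0 F a i / w i

/-- Payload density at a side-1 vertex. -/
noncomputable def density1 (F : Finset (V × V)) (w : V → ℝ) (a : V × V → ℝ) (j : V) : ℝ :=
  payload1 F a j / w j

/-- A side-0 refinement is locally maximin: positive weight is sent only to neighbours
of minimum payload density. -/
def LocallyMaximin0 (F : Finset (V × V)) (w : V → ℝ) (a : V × V → ℝ) : Prop :=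
  ∀ e ∈ F, 0 < a e → ∀ k, (e.1, k) ∈ F → density1 F w a e.2 ≤ density1 F w a k

/-- A side-1 refinement is locally maximin. -/
def LocallyMaximin1 (F : Finset (V × V)) (w : V → ℝ) (a : V × V → ℝ) : Prop :=
  ∀ e ∈ F, 0 < a e → ∀ k, (k, e.2) ∈ F → density0 F w a e.1 ≤ density0 F w a k

/-- `b` is the proportional response to the side-0 refinement `a`. -/
def IsPropRespOf0 (F : Finset (V × V)) (w : V → ℝ) (a b : V × V → ℝ) : Prop :=
  (∀ e, e ∉ F → b e = 0) ∧ ∀ e ∈ F, b e = a e * w e.2 / payload1 F a e.2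

/-- `a` is the proportional response to the side-1 refinement `b`. -/
def IsPropRespOf1 (F : Finset (V × V)) (w : V → ℝ) (b a : V × V → ℝ) : Prop :=
  (∀ e, e ∉ F → a e = 0) ∧ ∀ e ∈ F, a e = b e * w e.1 / payload0 F b e.1

/-- A distribution instance: an instance where every vertex has at least one neighbour
and the vertex weights on each side sum to 1. -/
def IsDistInstance (I0 I1 : Finset V) (F : Finset (V × V)) (w : V → ℝ) : Prop :=
  IsInstance I0 I1 F w ∧
    (∀ i ∈ I0, ∃ j, (i, j) ∈ F) ∧ (∀ j ∈ I1, ∃ i, (i, j) ∈ F) ∧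
    (∑ i ∈ I0, w i = 1) ∧ (∑ j ∈ I1, w j = 1)

/-- Hockey-stick divergence `D_γ(P ‖ Q) = max_{S ⊆ F} (Q(S) - γ·P(S))`. -/
noncomputable def hsDiv (F : Finset (V × V)) (γ : ℝ) (P Q : V × V → ℝ) : ℝ :=
  F.powerset.sup' ⟨∅, Finset.empty_mem_powerset F⟩
    (fun S => (∑ e ∈ S, Q e) - γ * ∑ e ∈ S, P e)

namespace HockeyStick

theorem le_hsDiv {W : Type*} {F S : Finset (W × W)} (hS : S ⊆ F) (γ : ℝ)
    (P Q : W × W → ℝ) :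
    ∑ e ∈ S, Q e - γ * ∑ e ∈ S, P e ≤ hsDiv F γ P Q :=
  le_sup' (fun S => ∑ e ∈ S, Q e - γ * ∑ e ∈ S, P e) (mem_powerset.mpr hS)

theorem hsDiv_eq_of_sign {W : Type*} {F E : Finset (W × W)} {γ : ℝ} {P Q : W × W → ℝ}
    (hE : E ⊆ F) (hpos : ∀ e ∈ E, 0 ≤ Q e - γ * P e)
    (hneg : ∀ e ∈ F, e ∉ E → Q e - γ * P e ≤ 0) :
    hsDiv F γ P Q = ∑ e ∈ E, Q e - γ * ∑ e ∈ E, P e := by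
  classical
  have hsum : ∀ S : Finset (W × W),
      ∑ e ∈ S, Q e - γ * ∑ e ∈ S, P e = ∑ e ∈ S, (Q e - γ * P e) := fun S => by
    rw [sum_sub_distrib, mul_sum]
  refine le_antisymm (sup'_le _ _ fun S hS => ?_) (le_hsDiv hE γ P Q)
  rw [mem_powerset] at hS
  rw [hsum, hsum, ← sum_inter_add_sum_sdiff S E]
  have hout : ∑ e ∈ S \ E, (Q e - γ * P e) ≤ 0 :=
    sum_nonpos fun e he => hneg e (hS (mem_sdiff.mp he).1) (mem_sdiff.mp he).2
  have hin : ∑ e ∈ S ∩ E, (Q e - γ * P e) ≤ ∑ e ∈ E, (Q e - γ * P e) :=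
    sum_le_sum_of_subset_of_nonneg inter_subset_right fun e he _ => hpos e he
  linarith

variable {I0 I1 : Finset V} {F : Finset (V × V)} {w : V → ℝ}

theorem IsPropRespOf0.payload1_pos {a b : V × V → ℝ} {j : V} (hpr : IsPropRespOf0 F w a b)
    (ha : ∀ e, 0 ≤ a e) (hb : payload1 F b j ≠ 0) : 0 < payload1 F a j := by
  refine (show 0 ≤ payload1 F a j from sum_nonneg fun e _ => ha e).lt_of_ne fun h =>
    hb (sum_eq_zero fun e he => ?_)
  rw [mem_filter] at he
  rw [hpr.2 e he.1, he.2, ← h, div_zero]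

theorem IsPropRespOf0.sub_mul_eq {a b : V × V → ℝ} {e : V × V} (hpr : IsPropRespOf0 F w a b)
    (he : e ∈ F) (hp : payload1 F a e.2 ≠ 0) (hw : w e.2 ≠ 0) (γ : ℝ) :
    b e - γ * a e = a e / density1 F w a e.2 * (1 - γ * density1 F w a e.2) := by
  rw [hpr.2 e he, density1]
  field_simp

theorem IsPropRespOf0.hsDiv_eq {a b : V × V → ℝ} (hpr : IsPropRespOf0 F w a b)
    (ha : ∀ e, 0 ≤ a e) (hp : ∀ e ∈ F, 0 < payload1 F a e.2) (hw : ∀ e ∈ F, 0 < w e.2)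
    (γ : ℝ) :
    hsDiv F γ a b = ∑ e ∈ F with γ * density1 F w a e.2 < 1, b e
      - γ * ∑ e ∈ F with γ * density1 F w a e.2 < 1, a e := by
  have hweight : ∀ e ∈ F, 0 ≤ a e / density1 F w a e.2 := fun e he =>
    div_nonneg (ha e) (div_pos (hp e he) (hw e he)).le
  refine hsDiv_eq_of_sign (filter_subset _ _) (fun e he => ?_) fun e he hnot => ?_
  · rw [mem_filter] at he
    rw [IsPropRespOf0.sub_mul_eq hpr he.1 (hp e he.1).ne' (hw e he.1).ne']
    exact mul_nonneg (hweight e he.1) (by linarith [he.2])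
  · rw [IsPropRespOf0.sub_mul_eq hpr he (hp e he).ne' (hw e he).ne']
    exact mul_nonpos_of_nonneg_of_nonpos (hweight e he)
      (by linarith [not_lt.mp fun h => hnot (mem_filter.mpr ⟨he, h⟩)])

theorem IsRefinement1.sum_filter_snd {b : V × V → ℝ} (hb : IsRefinement1 I1 F w b)
    (hedge : ∀ e ∈ F, e.2 ∈ I1) (hnbr : ∀ j ∈ I1, ∃ i, (i, j) ∈ F)
    (p : V → Prop) [DecidablePred p] :
    ∑ e ∈ F with p e.2, b e = ∑ j ∈ I1 with p j, w j := by
  rw [← sum_fiberwise_of_maps_to (g := Prod.snd) (t := I1.filter p)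
    fun e he => mem_filter.mpr ⟨hedge e (mem_filter.mp he).1, (mem_filter.mp he).2⟩]
  refine sum_congr rfl fun j hj => ?_
  rw [mem_filter] at hj
  rw [← hb.2.2 j hj.1 (hnbr j hj.1), payload1, filter_filter]
  refine sum_congr (filter_congr fun e _ => ?_) fun _ _ => rfl
  exact ⟨And.right, fun h => ⟨h ▸ hj.2, h⟩⟩

theorem IsRefinement0.sum_filter_le {b : V × V → ℝ} (hb : IsRefinement0 I0 F w b) {i : V}
    (hi : i ∈ I0) (hnbr : ∃ j, (i, j) ∈ F) (p : V × V → Prop) [DecidablePred p] :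
    ∑ e ∈ F with p e ∧ e.1 = i, b e ≤ w i := by
  rw [← hb.2.2 i hi hnbr, payload0]
  exact sum_le_sum_of_subset_of_nonneg (monotone_filter_right F fun _ _ => And.right)
    fun e _ _ => hb.1 e

theorem LocallyMaximin0.sum_filter_eq {a : V × V → ℝ} (ha : IsRefinement0 I0 F w a)
    (hm : LocallyMaximin0 F w a) {p : V → Prop} [DecidablePred p]
    (hp : ∀ j k, p k → density1 F w a j ≤ density1 F w a k → p j)
    {i k : V} (hi : i ∈ I0) (hik : (i, k) ∈ F) (hk : p k) :
    ∑ e ∈ F with p e.2 ∧ e.1 = i, a e = w i := by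
  rw [← ha.2.2 i hi ⟨k, hik⟩, payload0, ← filter_filter, filter_comm, sum_filter_of_ne]
  intro e he hae
  rw [mem_filter] at he
  exact hp _ k hk (hm e he.1 ((ha.1 e).lt_of_ne' hae) k (he.2 ▸ hik))

theorem LocallyMaximin0.sum_filter_snd_le {a b : V × V → ℝ} (ha : IsRefinement0 I0 F w a)
    (hm : LocallyMaximin0 F w a) (hb : IsRefinement0 I0 F w b) (hedge : ∀ e ∈ F, e.1 ∈ I0)
    {p : V → Prop} [DecidablePred p]
    (hp : ∀ j k, p k → density1 F w a j ≤ density1 F w a k → p j) :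
    ∑ e ∈ F with p e.2, b e ≤ ∑ e ∈ F with p e.2, a e := by
  have hmaps : ∀ e ∈ F.filter (fun e => p e.2), e.1 ∈ I0 :=
    fun e he => hedge e (mem_filter.mp he).1
  rw [← sum_fiberwise_of_maps_to hmaps b, ← sum_fiberwise_of_maps_to hmaps a]
  refine sum_le_sum fun i hi => ?_
  simp only [filter_filter]
  by_cases hadj : ∃ k, (i, k) ∈ F ∧ p k
  · obtain ⟨k, hik, hk⟩ := hadj
    rw [LocallyMaximin0.sum_filter_eq ha hm hp hi hik hk]
    exact IsRefinement0.sum_filter_le hb hi ⟨k, hik⟩ (fun e => p e.2)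
  · have hempty : F.filter (fun e => p e.2 ∧ e.1 = i) = ∅ :=
      filter_eq_empty_iff.mpr fun e he h => hadj ⟨e.2, h.2 ▸ he, h.1⟩
    simp only [hempty, sum_empty, le_refl]

end HockeyStick

open HockeyStick in
theorem locally_maximin_pair_closest_for_hockey_stick_general
    (I0 I1 : Finset V) (F : Finset (V × V)) (w : V → ℝ)
    (hG : IsDistInstance I0 I1 F w)
    (a0 a1 : V × V → ℝ)
    (ha0 : IsRefinement0 I0 F w a0) (ha1 : IsRefinement1 I1 F w a1)
    (hm0 : LocallyMaximin0 F w a0)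
    (hpr0 : IsPropRespOf0 F w a0 a1)
    (γ : ℝ) (hγ : 0 ≤ γ) :
    ∀ b0 b1 : V × V → ℝ, IsRefinement0 I0 F w b0 → IsRefinement1 I1 F w b1 →
      hsDiv F γ a0 a1 ≤ hsDiv F γ b0 b1 := by
  intro b0 b1 hb0 hb1
  obtain ⟨⟨-, hedge, hwpos⟩, -, hnbr1, -, -⟩ := hG
  have hw : ∀ e ∈ F, 0 < w e.2 := fun e he => hwpos _ (mem_union_right _ (hedge e he).2)
  have hpayload : ∀ e ∈ F, 0 < payload1 F a0 e.2 := fun e he =>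
    hpr0.payload1_pos ha0.1 <| by
      rw [ha1.2.2 _ (hedge e he).2 (hnbr1 _ (hedge e he).2)]; exact (hw e he).ne'
  set p : V → Prop := fun j => γ * density1 F w a0 j < 1
  have hdown : ∀ j k, p k → density1 F w a0 j ≤ density1 F w a0 k → p j := fun j k hk hjk =>
    (mul_le_mul_of_nonneg_left hjk hγ).trans_lt hk
  rw [hpr0.hsDiv_eq ha0.1 hpayload hw γ]
  refine le_trans ?_ (le_hsDiv (filter_subset (fun e => p e.2) F) γ b0 b1)
  rw [ha1.sum_filter_snd (fun e he => (hedge e he).2) hnbr1 p,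
    hb1.sum_filter_snd (fun e he => (hedge e he).2) hnbr1 p]
  exact sub_le_sub_left (mul_le_mul_of_nonneg_left
    (LocallyMaximin0.sum_filter_snd_le ha0 hm0 hb0 (fun e he => (hedge e he).1) hdown) hγ) _

/-- **A locally maximin pair is universally closest for all hockey-stick divergences.**
In a distribution instance, if the refinement pair `(a0, a1)` is locally maximin on both
sides and the two refinements are proportional responses to each other, then for every
`γ ≥ 0` and every refinement pair `(b0, b1)` we have `D_γ(a0 ‖ a1) ≤ D_γ(b0 ‖ b1)`. -/
theorem locally_maximin_pair_closest_for_hockey_stick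
    (I0 I1 : Finset V) (F : Finset (V × V)) (w : V → ℝ)
    (hG : IsDistInstance I0 I1 F w)
    (a0 a1 : V × V → ℝ)
    (ha0 : IsRefinement0 I0 F w a0) (ha1 : IsRefinement1 I1 F w a1)
    (hm0 : LocallyMaximin0 F w a0) (hm1 : LocallyMaximin1 F w a1)
    (hpr0 : IsPropRespOf0 F w a0 a1) (hpr1 : IsPropRespOf1 F w a1 a0)
    (γ : ℝ) (hγ : 0 ≤ γ) :
    ∀ b0 b1 : V × V → ℝ, IsRefinement0 I0 F w b0 → IsRefinement1 I1 F w b1 →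
      hsDiv F γ a0 a1 ≤ hsDiv F γ b0 b1 :=
  locally_maximin_pair_closest_for_hockey_stick_general I0 I1 F w hG a0 a1 ha0 ha1 hm0 hpr0 γ hγ
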